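/- Let V be a commutative unital quantale, λ a regular cardinal, and F : Set → Set a λ-accessible functor. Then every lax extension F̂ of F is λ-small; in fact F̂ = F̂^{M_λ}, where M_λ is the set of all Moss liftings of F̂ of arity α < λ, i.e. for every V-relation r : X ⇸ Y, F̂r = ⨅_{μ ∈ M_λ} F̂^μ r. -/
import Mathlib


/-!
Common framework: commutative unital quantales, `V`-relations, lax extensions,
predicate liftings, Moss liftings and the Kantorovich extension.
-/

universe u

namespace Paper

variable {V : Type u} [CommMonoid V] [CompleteLattice V]

/-- A `V`-relation `X ⇸ Y` is a map `X → Y → V`. -/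
abbrev VRel (V : Type u) (X Y : Type u) : Type u := X → Y → V

/-- Composition of `V`-relations: `(s · r)(x,z) = ⨆ y, r x y ⊗ s y z`. -/
def vcomp {X Y Z : Type u} (s : VRel V Y Z) (r : VRel V X Y) : VRel V X Z :=
  fun x z => ⨆ y, r x y * s y z

/-- The internal hom of the quantale: `hom u w = ⨆ {v | u ⊗ v ≤ w}`. -/
def qhom (u w : V) : V := sSup {v | u * v ≤ w}

/-- The lift `s ⊸ r` of `r : X ⇸ Z` along `s : Y ⇸ Z`. -/
def vlift {X Y Z : Type u} (s : VRel V Y Z) (r : VRel V X Z) : VRel V X Y :=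
  fun x y => ⨅ z, qhom (s y z) (r x z)

/-- The extension `r ⟜ s` of `r : Y ⇸ Z` along `s : Y ⇸ X`. -/
def vext {X Y Z : Type u} (r : VRel V Y Z) (s : VRel V Y X) : VRel V X Z :=
  fun x z => ⨅ y, qhom (s y x) (r y z)

/-- Converse of a `V`-relation. -/
def vconv {X Y : Type u} (r : VRel V X Y) : VRel V Y X := fun y x => r x y

/-- A function `f : X → Y` viewed as a `V`-relation `f_∘ : X ⇸ Y`. -/
def graph {X Y : Type u} (f : X → Y) : VRel V X Y :=
  fun x y => ⨆ _ : f x = y, (1 : V)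

/-- The identity `V`-relation `1_X : X ⇸ X`. -/
def idRel (V : Type u) [CommMonoid V] [CompleteLattice V] (X : Type u) : VRel V X X :=
  fun x y => ⨆ _ : x = y, (1 : V)

/-- The `V`-category structure `[r,s]` on `V`-relations `X ⇸ Y`. -/
def brkt {X Y : Type u} (r s : VRel V X Y) : V :=
  ⨅ (x : X), ⨅ (y : Y), qhom (r x y) (s x y)

/-- A lax extension of a `Set`-functor `F` to `V`-relations. -/
structure LaxExt (V : Type u) [CommMonoid V] [CompleteLattice V]
    (F : Type u → Type u) [Functor F] where
  ext : ∀ {X Y : Type u}, VRel V X Y → VRel V (F X) (F Y)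
  mono : ∀ {X Y : Type u} {r r' : VRel V X Y}, r ≤ r' → ext r ≤ ext r'
  lax_comp : ∀ {X Y Z : Type u} (r : VRel V X Y) (s : VRel V Y Z),
    vcomp (ext s) (ext r) ≤ ext (vcomp s r)
  map_le : ∀ {X Y : Type u} (f : X → Y),
    graph (Functor.map f : F X → F Y) ≤ ext (graph f)
  map_conv_le : ∀ {X Y : Type u} (f : X → Y),
    vconv (graph (Functor.map f : F X → F Y)) ≤ ext (vconv (graph f))

/-- A `V`-enriched lax extension. -/
def LaxExt.Enriched {F : Type u → Type u} [Functor F] (E : LaxExt V F) : Prop :=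
  ∀ (X Y : Type u) (r r' : VRel V X Y), brkt r r' ≤ brkt (E.ext r) (E.ext r')

/-- A `κ`-ary predicate lifting of `F`, viewed relationally: it sends a
`V`-relation `f : X ⇸ κ` naturally to a `V`-relation `μ f : F X ⇸ 1`. -/
structure PredLift (V : Type u) [CommMonoid V] [CompleteLattice V]
    (F : Type u → Type u) [Functor F] (κ : Type u) where
  app : ∀ {X : Type u}, VRel V X κ → VRel V (F X) PUnit
  natural : ∀ {X Y : Type u} (h : X → Y) (g : VRel V Y κ),
    app (vcomp g (graph h)) = vcomp (app g) (graph (Functor.map h : F X → F Y))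

/-- Monotonicity of a predicate lifting. -/
def PredLift.Monotone {F : Type u → Type u} [Functor F] {κ : Type u}
    (μ : PredLift V F κ) : Prop :=
  ∀ {X : Type u} {f f' : VRel V X κ}, f ≤ f' → μ.app f ≤ μ.app f'

/-- `V`-enrichment of a predicate lifting. -/
def PredLift.Enriched {F : Type u → Type u} [Functor F] {κ : Type u}
    (μ : PredLift V F κ) : Prop :=
  ∀ (X : Type u) (f f' : VRel V X κ), brkt f f' ≤ brkt (μ.app f) (μ.app f')

/-- A predicate lifting is induced by a lax extension `E` if `μ f = 𝔯 · E f`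
for some `𝔯 : F κ ⇸ 1`. -/
def PredLift.InducedBy {F : Type u → Type u} [Functor F] {κ : Type u}
    (μ : PredLift V F κ) (E : LaxExt V F) : Prop :=
  ∃ rr : VRel V (F κ) PUnit, ∀ (X : Type u) (f : VRel V X κ),
    μ.app f = vcomp rr (E.ext f)

/-- The (underlying assignment of the) Moss lifting `μ^𝔨` of a lax extension,
determined by an element `𝔨 ∈ F κ`: `μ^𝔨 f = (𝔨_∘)° · E f`. -/
def mossApp {F : Type u → Type u} [Functor F] (E : LaxExt V F) {κ : Type u}
    (k : F κ) (X : Type u) (f : VRel V X κ) : VRel V (F X) PUnit :=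
  vcomp (vconv (graph (fun _ : PUnit => k))) (E.ext f)

/-- The Kantorovich extension of a `κ`-ary predicate-lifting assignment. -/
def kant {F : Type u → Type u} [Functor F] {κ : Type u}
    (μ : ∀ (X : Type u), VRel V X κ → VRel V (F X) PUnit)
    {X Y : Type u} (r : VRel V X Y) : VRel V (F X) (F Y) :=
  ⨅ g : VRel V Y κ, vlift (μ Y g) (μ X (vcomp g r))

/-- The Kantorovich extension of a predicate lifting. -/
def PredLift.kant {F : Type u → Type u} [Functor F] {κ : Type u}
    (μ : PredLift V F κ) {X Y : Type u} (r : VRel V X Y) : VRel V (F X) (F Y) :=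
  Paper.kant (fun _ g => μ.app g) r

/-- The evaluation `V`-relation `ev_κ : V^κ ⇸ κ`. -/
def evRel (V : Type u) [CommMonoid V] [CompleteLattice V] (κ : Type u) :
    VRel V (κ → V) κ :=
  fun φ i => φ i

end Paper

section Aux
open Paper

variable {V : Type u} [CommMonoid V] [CompleteLattice V] [IsQuantale V]

lemma mul_iSup_distrib' {ι : Sort*} (x : V) (f : ι → V) :
    x * ⨆ i, f i = ⨆ i, x * f i := by
  rw [iSup, mul_sSup_distrib, iSup_range]

omit [IsQuantale V] in
lemma le_qhom {u v w : V} (h : u * v ≤ w) : v ≤ qhom u w := le_sSup h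

lemma qhom_le_of_one_le {u w : V} (h : 1 ≤ u) : qhom u w ≤ w := by
  apply sSup_le; intro v hv
  calc v = 1 * v := (one_mul v).symm
    _ ≤ u * v := mul_le_mul_left h v
    _ ≤ w := hv

lemma mossApp_eval {F : Type u → Type u} [Functor F] (E : LaxExt V F) {κ X : Type u}
    (k : F κ) (f : VRel V X κ) (x : F X) (p : PUnit) :
    mossApp E k X f x p = E.ext f x k := by
  show (⨆ c, E.ext f x c * ⨆ _ : k = c, (1 : V)) = E.ext f x k
  apply le_antisymm
  · apply iSup_le; intro c
    rw [mul_iSup_distrib']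
    apply iSup_le; intro h
    cases h; rw [mul_one]
  · calc E.ext f x k = E.ext f x k * 1 := (mul_one _).symm
      _ ≤ E.ext f x k * ⨆ _ : k = k, (1 : V) := mul_le_mul_right (le_iSup (fun _ : k = k => (1 : V)) rfl) _
      _ ≤ _ := le_iSup (fun c => E.ext f x c * ⨆ _ : k = c, (1 : V)) k

end Aux

open Paper in
/-- Every lax extension of a `λ`-accessible (equivalently,
`λ`-bounded) functor is `λ`-small: it is the Kantorovich extension of its
Moss liftings of arity `< λ`. -/
theorem laxext_of_accessible_is_small {V : Type u} [CommMonoid V] [CompleteLattice V]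
    [IsQuantale V] {F : Type u → Type u} [Functor F] [LawfulFunctor F]
    (lam : Cardinal.{u}) (hreg : lam.IsRegular)
    (hacc : ∀ (X : Type u) (x : F X), ∃ A : Set X, Cardinal.mk A < lam ∧
        ∃ a : F A, Functor.map (Subtype.val : A → X) a = x)
    (E : LaxExt V F) (X Y : Type u) (r : VRel V X Y) :
    E.ext r = ⨅ (α : Type u) (_ : Cardinal.mk α < lam) (k : F α),
      kant (mossApp E k) r := by
  apply le_antisymm
  · refine le_iInf fun α => le_iInf fun hα => le_iInf fun k => ?_
    unfold kant vlift
    refine le_iInf fun g => ?_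
    intro x y
    refine le_iInf fun z => ?_
    rw [mossApp_eval, mossApp_eval]
    apply le_qhom
    calc E.ext g y k * E.ext r x y
        = E.ext r x y * E.ext g y k := mul_comm _ _
      _ ≤ ⨆ y', E.ext r x y' * E.ext g y' k := le_iSup (fun y' => E.ext r x y' * E.ext g y' k) y
      _ ≤ E.ext (vcomp g r) x k := E.lax_comp r g x k
  · intro x y
    obtain ⟨A, hA, b, hb⟩ := hacc Y y
    set m : ↥A → Y := Subtype.val with hm
    set g : VRel V Y ↥A := vconv (graph m) with hg
    have h1 : (⨅ (α : Type u) (_ : Cardinal.mk α < lam) (k : F α),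
        kant (mossApp E k) r) ≤ kant (mossApp E b) r := by
      refine iInf_le_of_le ↥A ?_
      refine iInf_le_of_le hA ?_
      exact iInf_le _ b
    refine (h1 x y).trans ?_
    have h2 : kant (mossApp E b) r x y ≤
        qhom (E.ext g y b) (E.ext (vcomp g r) x b) := by
      have h3 : kant (mossApp E b) r ≤
          vlift (mossApp E b Y g) (mossApp E b X (vcomp g r)) :=
        iInf_le (fun g' : VRel V Y ↥A =>
          vlift (mossApp E b Y g') (mossApp E b X (vcomp g' r))) g
      refine le_trans (h3 x y) ?_
      refine le_trans (iInf_le _ PUnit.unit) ?_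
      rw [mossApp_eval, mossApp_eval]
    refine h2.trans ?_
    have hone : (1 : V) ≤ E.ext g y b := by
      refine le_trans ?_ (E.map_conv_le m y b)
      exact le_iSup (fun _ : Functor.map m b = y => (1 : V)) hb
    refine (qhom_le_of_one_le hone).trans ?_
    have hsub : vcomp (graph m) (vcomp g r) ≤ r := by
      intro x' y'
      apply iSup_le; intro a
      rw [hg]
      simp only [vcomp, vconv, graph]
      rw [mul_iSup_distrib']
      apply iSup_le; intro h
      cases h
      rw [mul_one]
      apply iSup_le; intro y''
      rw [mul_iSup_distrib']
      apply iSup_le; intro h'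
      cases h'
      rw [mul_one]
    calc E.ext (vcomp g r) x b
        = E.ext (vcomp g r) x b * 1 := (mul_one _).symm
      _ ≤ E.ext (vcomp g r) x b * graph (Functor.map m : F ↥A → F Y) b y :=
          mul_le_mul_right (le_iSup (fun _ : Functor.map m b = y => (1 : V)) hb) _
      _ ≤ E.ext (vcomp g r) x b * E.ext (graph m) b y :=
          mul_le_mul_right (E.map_le m b y) _
      _ ≤ ⨆ c, E.ext (vcomp g r) x c * E.ext (graph m) c y := le_iSup (fun c => E.ext (vcomp g r) x c * E.ext (graph m) c y) b
      _ ≤ E.ext (vcomp (graph m) (vcomp g r)) x y := E.lax_comp (vcomp g r) (graph m) x y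
      _ ≤ E.ext r x y := E.mono hsub x y
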